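/- Let n ≥ 1 and let X ∈ ℝ^{n×n}. Let τ, κ, δ, γ, C > 0. Let α* ∈ ℝ, and let L*, S* ∈ ℝ^{n×n} with L* symmetric positive semidefinite satisfying J L* = L* and ‖L*‖_∞ ≤ κ/n, S* symmetric, and |α*| ≤ Cκ. Set Θ* = α*𝟙𝟙ᵀ + L* + S* and P*_{ij} = exp(Θ*_{ij})/(1+exp(Θ*_{ij})). Let (α̂, L̂, Ŝ) minimize F(α,L,S) = h(α𝟙𝟙ᵀ+L+S) + δ‖L‖_* + γ‖S‖_1 over all α ∈ ℝ with |α| ≤ Cκ, S ∈ ℝ^{n×n} symmetric, and L ∈ ℝ^{n×n} symmetric positive semidefinite with J L = L and ‖L‖_∞ ≤ κ/n, and set Θ̂ = α̂𝟙𝟙ᵀ + L̂ + Ŝ. Assume the strong-convexity bound h(Θ̂) − h(Θ*) ≥ −(1/n)⟨X − P*, Θ̂ − Θ*⟩ + (τ/2)‖Θ̂ − Θ*‖_F², and assume δ ≥ 2‖(1/n)(X − P*)‖_op and γ ≥ 2‖(1/n)(X − P*)‖_∞ + 4κτ(Cn+1)/n. Then there exist universal constants c₁, c₂, c₃ > 0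 (independent of all of the above data) such that for every k ∈ {1,…,n}, every s ∈ {1,…,n²}, and every index set M ⊆ {1,…,n}×{1,…,n} with |M| ≤ s: ‖(α̂−α*)𝟙𝟙ᵀ‖_F² + ‖L̂−L*‖_F² + ‖Ŝ−S*‖_F² ≤ c₁ δ²/τ² + c₂ (δ²/τ²)·(k + (τ/δ)·Σ_{j=k+1}^{n} σ_j(L*)) + c₃ (γ²/τ²)·(s + (τ/γ)·Σ_{(i,j)∉M} |S*_{ij}|). -/

import Mathlib

open Matrix BigOperators Finset

noncomputable section

namespace CitNet

variable {n : ℕ}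

/-- Frobenius norm of a real matrix. -/
def frob (A : Matrix (Fin n) (Fin n) ℝ) : ℝ :=
  Real.sqrt (∑ i, ∑ j, (A i j) ^ 2)

/-- Elementwise ℓ1 norm. -/
def l1 (A : Matrix (Fin n) (Fin n) ℝ) : ℝ :=
  ∑ i, ∑ j, |A i j|

/-- Elementwise sup norm. -/
def supNorm (A : Matrix (Fin n) (Fin n) ℝ) : ℝ :=
  ⨆ i, ⨆ j, |A i j|

/-- Trace inner product. -/
def tinner (A B : Matrix (Fin n) (Fin n) ℝ) : ℝ :=
  Matrix.trace (Aᵀ * B)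

/-- Nuclear norm: trace of the PSD square root of AᴴA. -/
def nuclearNorm (A : Matrix (Fin n) (Fin n) ℝ) : ℝ :=
  ((Matrix.posSemidef_conjTranspose_mul_self A).1.eigenvectorUnitary.1 *
    Matrix.diagonal (fun i => Real.sqrt
      ((Matrix.posSemidef_conjTranspose_mul_self A).1.eigenvalues i)) *
    (star (Matrix.posSemidef_conjTranspose_mul_self A).1.eigenvectorUnitary.1)).trace

/-- Singular values in decreasing order: `svDesc A j` is σ_{j+1}(A). -/
def svDesc (A : Matrix (Fin n) (Fin n) ℝ) : Fin n → ℝ := fun j =>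
  Real.sqrt ((show (Aᵀ * A).IsHermitian by
      simpa using Matrix.isHermitian_conjTranspose_mul_self A).eigenvalues
    (Tuple.sort (show (Aᵀ * A).IsHermitian by
      simpa using Matrix.isHermitian_conjTranspose_mul_self A).eigenvalues j.rev))

/-- Operator norm: largest singular value. -/
def opNorm (A : Matrix (Fin n) (Fin n) ℝ) : ℝ :=
  ⨆ j, svDesc A j

/-- The all-ones matrix 𝟙𝟙ᵀ. -/
def onesMat : Matrix (Fin n) (Fin n) ℝ :=
  Matrix.of fun _ _ => (1 : ℝ)

/-- The centering matrix J = I − (1/n)𝟙𝟙ᵀ. -/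
def Jmat (n : ℕ) : Matrix (Fin n) (Fin n) ℝ :=
  1 - (n : ℝ)⁻¹ • onesMat

/-- Restriction of a matrix to an index set. -/
def restrict (A : Matrix (Fin n) (Fin n) ℝ) (Ω : Finset (Fin n × Fin n)) :
    Matrix (Fin n) (Fin n) ℝ :=
  Matrix.of fun i j => if (i, j) ∈ Ω then A i j else 0

/-- The logistic (sigmoid) matrix P(Θ). -/
def logis (Θ : Matrix (Fin n) (Fin n) ℝ) : Matrix (Fin n) (Fin n) ℝ :=
  Matrix.of fun i j => Real.exp (Θ i j) / (1 + Real.exp (Θ i j))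

/-- Negative log-likelihood function h. -/
def hfun (X Θ : Matrix (Fin n) (Fin n) ℝ) : ℝ :=
  -(1 / (n : ℝ)) * ∑ i, ∑ j, (X i j * Θ i j - Real.log (1 + Real.exp (Θ i j)))

/-!
Write `W = (1/n)(X - P*)` and `Δ = Θ̂ - Θ*`. Comparing the minimizer with the truth and using strong
convexity gives the basic inequality `(τ/2)‖Δ‖_F² ≤ ⟨W, Δ⟩ + δ (tr L* - tr L̂) + γ (‖S*‖₁ - ‖Ŝ‖₁)`,
the nuclear norm of a PSD matrix being its trace. As `J L = L`, the low-rank error is orthogonal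
to `𝟙𝟙ᵀ`, so `‖Δ‖_F²` is the sum of the three squared errors plus the cross term
`2⟨(α̂-α*)𝟙𝟙ᵀ + ΔL, ΔS⟩`; the sup-norm constraints bound it by a multiple of `‖ΔS‖₁`, which the
choice of `γ` absorbs. Both penalties are decomposable: the projection `P` onto the top `k`
singular directions of `L*` gives
`⟨W, ΔL⟩ + δ (tr L* - tr L̂) ≤ 2δ√k ‖ΔL‖_F + (3/2)δ Σ_{j>k} σ_j(L*)`,
and splitting the entries along `M` gives the `ℓ₁` analogue with `√s`. The result is a quadratic
inequality in the three errors, which Young's inequality solves.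
-/

section FrobeniusInner

variable (A B C : Matrix (Fin n) (Fin n) ℝ)

lemma frob_nonneg : 0 ≤ frob A := Real.sqrt_nonneg _

lemma frob_sq : frob A ^ 2 = ∑ i, ∑ j, A i j ^ 2 := Real.sq_sqrt (by positivity)

lemma tinner_eq_sum : tinner A B = ∑ i, ∑ j, A i j * B i j := by
  simp only [tinner, trace, Matrix.diag, mul_apply, transpose_apply]
  exact Finset.sum_comm

lemma tinner_comm : tinner A B = tinner B A := by
  simp only [tinner_eq_sum, mul_comm]

lemma tinner_self : tinner A A = frob A ^ 2 := by
  rw [tinner_eq_sum, frob_sq]; simp only [sq]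

lemma tinner_add_left : tinner (A + B) C = tinner A C + tinner B C := by
  simp [tinner, Matrix.add_mul]

lemma tinner_add_right : tinner A (B + C) = tinner A B + tinner A C := by
  simp [tinner, Matrix.mul_add]

lemma tinner_sub_left : tinner (A - B) C = tinner A C - tinner B C := by
  simp [tinner, Matrix.sub_mul]

lemma tinner_sub_right : tinner A (B - C) = tinner A B - tinner A C := by
  simp [tinner, Matrix.mul_sub]

lemma tinner_smul_left (r : ℝ) : tinner (r • A) B = r * tinner A B := by
  simp [tinner]

lemma tinner_smul_right (r : ℝ) : tinner A (r • B) = r * tinner A B := by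
  simp [tinner]

lemma tinner_mul_left : tinner A (B * C) = tinner (Bᵀ * A) C := by
  simp only [tinner, transpose_mul, transpose_transpose, Matrix.mul_assoc]

lemma tinner_mul_right : tinner A (B * C) = tinner (A * Cᵀ) B := by
  simp only [tinner, transpose_mul, transpose_transpose, ← Matrix.mul_assoc]
  exact trace_mul_cycle _ _ _

lemma frob_transpose : frob Aᵀ = frob A := by
  rw [frob, Finset.sum_comm]; rfl

lemma frob_add_sq : frob (A + B) ^ 2 = frob A ^ 2 + 2 * tinner A B + frob B ^ 2 := by
  simp only [← tinner_self, tinner_add_left, tinner_add_right, tinner_comm B A]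
  ring

lemma abs_tinner_le : |tinner A B| ≤ frob A * frob B := by
  have hcs := Finset.sum_mul_sq_le_sq_mul_sq univ
    (fun p : Fin n × Fin n => A p.1 p.2) (fun p => B p.1 p.2)
  simp only [← univ_product_univ, sum_product] at hcs
  rw [← Real.sqrt_sq_eq_abs, frob, frob, ← Real.sqrt_mul (by positivity), tinner_eq_sum]
  exact Real.sqrt_le_sqrt hcs

lemma tinner_le : tinner A B ≤ frob A * frob B := (le_abs_self _).trans (abs_tinner_le A B)

end FrobeniusInner

section Entrywise

variable (A : Matrix (Fin n) (Fin n) ℝ)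

lemma abs_le_supNorm (i j : Fin n) : |A i j| ≤ supNorm A :=
  (le_ciSup (f := fun j' => |A i j'|) (Set.finite_range _).bddAbove j).trans
    (le_ciSup (f := fun i' => ⨆ j', |A i' j'|) (Set.finite_range _).bddAbove i)

lemma abs_tinner_le_mul_l1 (B : Matrix (Fin n) (Fin n) ℝ) {c : ℝ} (hA : ∀ i j, |A i j| ≤ c) :
    |tinner A B| ≤ c * l1 B := by
  rw [tinner_eq_sum, l1, mul_sum]
  refine (abs_sum_le_sum_abs _ _).trans (sum_le_sum fun i _ => ?_)
  rw [mul_sum]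
  refine (abs_sum_le_sum_abs _ _).trans (sum_le_sum fun j _ => ?_)
  rw [abs_mul]
  exact mul_le_mul_of_nonneg_right (hA i j) (abs_nonneg _)

lemma l1_eq_sum_add_sum_compl (M : Finset (Fin n × Fin n)) :
    l1 A = ∑ p ∈ M, |A p.1 p.2| + ∑ p ∈ univ \ M, |A p.1 p.2| := by
  rw [l1, ← Fintype.sum_prod_type', add_comm, sum_sdiff (subset_univ M)]

lemma sum_abs_le_sqrt_mul_frob {M : Finset (Fin n × Fin n)} {s : ℕ} (hM : M.card ≤ s) :
    ∑ p ∈ M, |A p.1 p.2| ≤ √s * frob A := by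
  have hsq : ∑ p ∈ M, |A p.1 p.2| ^ 2 ≤ frob A ^ 2 := by
    rw [frob_sq, ← Fintype.sum_prod_type']
    simp only [sq_abs]
    exact sum_le_sum_of_subset_of_nonneg (subset_univ M) fun _ _ _ => sq_nonneg _
  have hcs : (∑ p ∈ M, |A p.1 p.2|) ^ 2 ≤ (√s * frob A) ^ 2 := by
    rw [mul_pow, Real.sq_sqrt (Nat.cast_nonneg s)]
    exact (sq_sum_le_card_mul_sum_sq ..).trans
      (mul_le_mul (by exact_mod_cast hM) hsq (by positivity) (Nat.cast_nonneg s))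
  exact (pow_le_pow_iff_left₀ (sum_nonneg fun _ _ => abs_nonneg _)
    (mul_nonneg (Real.sqrt_nonneg _) (frob_nonneg A)) two_ne_zero).mp hcs

lemma l1_sub_l1_le (S S' : Matrix (Fin n) (Fin n) ℝ) (M : Finset (Fin n × Fin n)) :
    l1 S - l1 S' ≤ ∑ p ∈ M, |(S' - S) p.1 p.2| - ∑ p ∈ univ \ M, |(S' - S) p.1 p.2|
      + 2 * ∑ p ∈ univ \ M, |S p.1 p.2| := by
  have hM : ∑ p ∈ M, (|S p.1 p.2| - |S' p.1 p.2|) ≤ ∑ p ∈ M, |(S' - S) p.1 p.2| :=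
    sum_le_sum fun p _ => by
      rw [Matrix.sub_apply, abs_sub_comm]; exact abs_sub_abs_le_abs_sub _ _
  have hMc : ∑ p ∈ univ \ M, (|S p.1 p.2| - |S' p.1 p.2|)
      ≤ ∑ p ∈ univ \ M, (2 * |S p.1 p.2| - |(S' - S) p.1 p.2|) :=
    sum_le_sum fun p _ => by
      rw [Matrix.sub_apply]; linarith [abs_sub (S' p.1 p.2) (S p.1 p.2)]
  rw [l1_eq_sum_add_sum_compl S M, l1_eq_sum_add_sum_compl S' M]
  simp only [sum_sub_distrib, ← mul_sum] at hM hMc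
  linarith

lemma tinner_sub_add_l1_sub_le {B : Matrix (Fin n) (Fin n) ℝ} {γ : ℝ} (hγ : 0 ≤ γ)
    (hB : ∀ i j, |B i j| ≤ γ / 2) (S S' : Matrix (Fin n) (Fin n) ℝ)
    {M : Finset (Fin n × Fin n)} {s : ℕ} (hM : M.card ≤ s) :
    tinner B (S' - S) + γ * (l1 S - l1 S')
      ≤ 3 / 2 * γ * √s * frob (S' - S) + 2 * γ * ∑ p ∈ univ \ M, |S p.1 p.2| := by
  have hinner := (le_abs_self _).trans (abs_tinner_le_mul_l1 B (S' - S) hB)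
  rw [l1_eq_sum_add_sum_compl _ M] at hinner
  have hl1 := mul_le_mul_of_nonneg_left (l1_sub_l1_le S S' M) hγ
  have hsupp := mul_le_mul_of_nonneg_left (sum_abs_le_sqrt_mul_frob (S' - S) hM) hγ
  have hoff : 0 ≤ γ * ∑ p ∈ univ \ M, |(S' - S) p.1 p.2| :=
    mul_nonneg hγ (sum_nonneg fun _ _ => abs_nonneg _)
  linarith

end Entrywise

lemma isHermitian_transpose_mul_self (A : Matrix (Fin n) (Fin n) ℝ) : (Aᵀ * A).IsHermitian := by
  simpa using isHermitian_conjTranspose_mul_self A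

lemma _root_.Matrix.IsHermitian.transpose_eigenvectorUnitary_mul {A : Matrix (Fin n) (Fin n) ℝ}
    (hA : A.IsHermitian) : (hA.eigenvectorUnitary.1)ᵀ * hA.eigenvectorUnitary.1 = 1 := by
  rw [← conjTranspose_eq_transpose_of_trivial, ← star_eq_conjTranspose]
  exact mem_unitaryGroup_iff'.mp hA.eigenvectorUnitary.2

lemma _root_.Matrix.IsHermitian.eigenvectorUnitary_mul_transpose {A : Matrix (Fin n) (Fin n) ℝ}
    (hA : A.IsHermitian) : hA.eigenvectorUnitary.1 * (hA.eigenvectorUnitary.1)ᵀ = 1 :=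
  mul_eq_one_comm.mp hA.transpose_eigenvectorUnitary_mul

lemma _root_.Matrix.IsHermitian.eq_eigenvectorUnitary_mul_diagonal {A : Matrix (Fin n) (Fin n) ℝ}
    (hA : A.IsHermitian) :
    A = hA.eigenvectorUnitary.1 * diagonal hA.eigenvalues * (hA.eigenvectorUnitary.1)ᵀ := by
  conv_lhs => rw [hA.spectral_theorem]
  simp [RCLike.ofReal_real_eq_id, star_eq_conjTranspose, conjTranspose_eq_transpose_of_trivial]

lemma tinner_transpose_mul_transpose_mul {U : Matrix (Fin n) (Fin n) ℝ} (hU : U * Uᵀ = 1)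
    (A B : Matrix (Fin n) (Fin n) ℝ) : tinner (Uᵀ * A) (Uᵀ * B) = tinner A B := by
  rw [tinner_mul_left, transpose_transpose, ← Matrix.mul_assoc, hU, Matrix.one_mul]

lemma tinner_diagonal_mul (g : Fin n → ℝ) (N : Matrix (Fin n) (Fin n) ℝ) :
    tinner N (diagonal g * N) = ∑ j, g j * ∑ i, N j i ^ 2 := by
  simp only [tinner_eq_sum, diagonal_mul, mul_sum]
  exact sum_congr rfl fun _ _ => sum_congr rfl fun _ _ => by ring

lemma svDesc_nonneg (A : Matrix (Fin n) (Fin n) ℝ) (j : Fin n) : 0 ≤ svDesc A j :=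
  Real.sqrt_nonneg _

lemma svDesc_le_opNorm (A : Matrix (Fin n) (Fin n) ℝ) (j : Fin n) : svDesc A j ≤ opNorm A :=
  le_ciSup (Set.finite_range _).bddAbove j

lemma opNorm_nonneg (A : Matrix (Fin n) (Fin n) ℝ) : 0 ≤ opNorm A :=
  Real.iSup_nonneg (svDesc_nonneg A)

lemma eigenvalues_transpose_mul_self_le_sq_opNorm (A : Matrix (Fin n) (Fin n) ℝ) (j : Fin n) :
    (isHermitian_transpose_mul_self A).eigenvalues j ≤ opNorm A ^ 2 := by
  set hAA := isHermitian_transpose_mul_self A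
  have hsv : svDesc A ((Tuple.sort hAA.eigenvalues).symm j).rev = √(hAA.eigenvalues j) := by
    simp only [svDesc, Fin.rev_rev, Equiv.apply_symm_apply]
  have hμ : 0 ≤ hAA.eigenvalues j := (posSemidef_conjTranspose_mul_self A).eigenvalues_nonneg j
  rw [← Real.sq_sqrt hμ, ← hsv]
  exact pow_le_pow_left₀ (svDesc_nonneg _ _) (svDesc_le_opNorm _ _) 2

lemma frob_mul_le (A M : Matrix (Fin n) (Fin n) ℝ) : frob (A * M) ≤ opNorm A * frob M := by
  set hAA := isHermitian_transpose_mul_self A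
  set U := hAA.eigenvectorUnitary.1
  have hspec := hAA.eq_eigenvectorUnitary_mul_diagonal
  have hsq : frob (A * M) ^ 2 ≤ (opNorm A * frob M) ^ 2 := calc
    frob (A * M) ^ 2 = tinner (Aᵀ * A * M) M := by
      rw [← tinner_self, tinner_mul_left, ← Matrix.mul_assoc]
    _ = tinner (Uᵀ * M) (diagonal hAA.eigenvalues * (Uᵀ * M)) := by
      conv_lhs => rw [hspec]
      rw [tinner_comm, Matrix.mul_assoc, Matrix.mul_assoc, tinner_mul_left]
    _ = ∑ j, hAA.eigenvalues j * ∑ i, (Uᵀ * M) j i ^ 2 := tinner_diagonal_mul _ _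
    _ ≤ ∑ j, opNorm A ^ 2 * ∑ i, (Uᵀ * M) j i ^ 2 := sum_le_sum fun j _ =>
      mul_le_mul_of_nonneg_right (eigenvalues_transpose_mul_self_le_sq_opNorm A j) (by positivity)
    _ = (opNorm A * frob M) ^ 2 := by
      rw [← mul_sum, ← frob_sq, ← tinner_self,
        tinner_transpose_mul_transpose_mul hAA.eigenvectorUnitary_mul_transpose, tinner_self,
        mul_pow]
  exact (pow_le_pow_iff_left₀ (frob_nonneg _)
    (mul_nonneg (opNorm_nonneg A) (frob_nonneg M)) two_ne_zero).mp hsq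

lemma frob_transpose_mul_le (A M : Matrix (Fin n) (Fin n) ℝ) :
    frob (Aᵀ * M) ≤ opNorm A * frob M := by
  have h : frob (Aᵀ * M) ^ 2 ≤ opNorm A * frob M * frob (Aᵀ * M) := calc
    frob (Aᵀ * M) ^ 2 = tinner (A * (Aᵀ * M)) M := by
      rw [← tinner_self, tinner_mul_left, transpose_transpose]
    _ ≤ frob (A * (Aᵀ * M)) * frob M := tinner_le _ _
    _ ≤ opNorm A * frob (Aᵀ * M) * frob M :=
      mul_le_mul_of_nonneg_right (frob_mul_le _ _) (frob_nonneg M)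
    _ = _ := by ring
  nlinarith [frob_nonneg (Aᵀ * M), mul_nonneg (opNorm_nonneg A) (frob_nonneg M)]

open scoped MatrixOrder in
lemma abs_tinner_le_opNorm_mul_trace (W : Matrix (Fin n) (Fin n) ℝ)
    {S : Matrix (Fin n) (Fin n) ℝ} (hS : S.PosSemidef) : |tinner W S| ≤ opNorm W * S.trace := by
  set B := CFC.sqrt S
  have hBt : Bᵀ = B := by
    rw [← conjTranspose_eq_transpose_of_trivial]; exact (CFC.sqrt_nonneg S).posSemidef.1
  have hBB : B * B = S := CFC.sqrt_mul_sqrt_self S hS.nonneg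
  calc |tinner W S| = |tinner (W * B) B| := by rw [← hBB, tinner_mul_right, hBt]
    _ ≤ frob (W * B) * frob B := abs_tinner_le _ _
    _ ≤ opNorm W * frob B * frob B := mul_le_mul_of_nonneg_right (frob_mul_le W B) (frob_nonneg B)
    _ = opNorm W * S.trace := by rw [mul_assoc, ← sq, ← tinner_self, tinner, hBt, hBB]

section Projection

variable {P : Matrix (Fin n) (Fin n) ℝ} (hP : IsStarProjection P)
include hP

lemma _root_.IsStarProjection.transpose_eq : Pᵀ = P := by
  rw [← conjTranspose_eq_transpose_of_trivial]; exact hP.isSelfAdjoint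

lemma _root_.IsStarProjection.frob_sq_eq_trace : frob P ^ 2 = P.trace := by
  rw [← tinner_self, tinner, hP.transpose_eq, hP.isIdempotentElem.eq]

lemma _root_.IsStarProjection.frob_mul_le (M : Matrix (Fin n) (Fin n) ℝ) :
    frob (P * M) ≤ frob M := by
  have h : frob (P * M) ^ 2 ≤ frob M * frob (P * M) := by
    rw [← tinner_self, tinner_mul_left, ← Matrix.mul_assoc, hP.transpose_eq,
      hP.isIdempotentElem.eq, tinner_comm]
    exact tinner_le _ _
  nlinarith [frob_nonneg (P * M), frob_nonneg M]

lemma _root_.IsStarProjection.tinner_mul_le (W D : Matrix (Fin n) (Fin n) ℝ) :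
    tinner W (P * D) ≤ opNorm W * frob P * frob D := calc
  tinner W (P * D) = tinner (Wᵀ * P)ᵀ D := by
    rw [tinner_mul_left, transpose_mul, transpose_transpose, hP.transpose_eq]
  _ ≤ frob (Wᵀ * P)ᵀ * frob D := tinner_le _ _
  _ ≤ opNorm W * frob P * frob D := by
    rw [frob_transpose]
    exact mul_le_mul_of_nonneg_right (frob_transpose_mul_le W P) (frob_nonneg D)

lemma _root_.IsStarProjection.tinner_one_sub_mul_mul_le (W D : Matrix (Fin n) (Fin n) ℝ) :
    tinner W ((1 - P) * D * P) ≤ opNorm W * frob P * frob D := calc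
  tinner W ((1 - P) * D * P) = tinner ((1 - P) * (W * P)) D := by
    rw [tinner_mul_right, tinner_mul_left, hP.one_sub.transpose_eq, hP.transpose_eq]
  _ ≤ frob ((1 - P) * (W * P)) * frob D := tinner_le _ _
  _ ≤ opNorm W * frob P * frob D :=
    mul_le_mul_of_nonneg_right ((hP.one_sub.frob_mul_le _).trans (frob_mul_le W P))
      (frob_nonneg D)

lemma _root_.IsStarProjection.trace_one_sub_mul_mul (L : Matrix (Fin n) (Fin n) ℝ) :
    ((1 - P) * L * (1 - P)).trace = L.trace - tinner P L := by
  rw [trace_mul_cycle, hP.one_sub.isIdempotentElem.eq, sub_mul, trace_sub, Matrix.one_mul,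
    tinner, hP.transpose_eq, trace_mul_comm]

lemma _root_.IsStarProjection.posSemidef_one_sub_mul_mul {L : Matrix (Fin n) (Fin n) ℝ}
    (hL : L.PosSemidef) : ((1 - P) * L * (1 - P)).PosSemidef := by
  have h := hL.mul_mul_conjTranspose_same (1 - P)
  rwa [conjTranspose_eq_transpose_of_trivial, hP.one_sub.transpose_eq] at h

end Projection

lemma tinner_sub_add_trace_sub_le {W P : Matrix (Fin n) (Fin n) ℝ} {δ : ℝ}
    (hW : 2 * opNorm W ≤ δ) (hP : IsStarProjection P) {L L' : Matrix (Fin n) (Fin n) ℝ}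
    (hL : L.PosSemidef) (hL' : L'.PosSemidef) :
    tinner W (L' - L) + δ * (L.trace - L'.trace)
      ≤ 2 * δ * frob P * frob (L' - L) + 3 / 2 * δ * (L.trace - tinner P L) := by
  set D := L' - L
  -- the first two blocks have rank at most that of `P`; the last one is a difference of PSD
  -- matrices, controlled through traces
  have hsplit : D = P * D + (1 - P) * D * P + (1 - P) * D * (1 - P) := by
    simp only [Matrix.mul_sub, Matrix.mul_one, sub_mul, Matrix.one_mul]; abel
  have htail : tinner W ((1 - P) * D * (1 - P))
      ≤ opNorm W * ((L'.trace - tinner P L') + (L.trace - tinner P L)) := by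
    have h' := abs_tinner_le_opNorm_mul_trace W (hP.posSemidef_one_sub_mul_mul hL')
    have h := abs_tinner_le_opNorm_mul_trace W (hP.posSemidef_one_sub_mul_mul hL)
    rw [hP.trace_one_sub_mul_mul] at h h'
    rw [show (1 - P) * D * (1 - P) = (1 - P) * L' * (1 - P) - (1 - P) * L * (1 - P) by
      simp only [D, Matrix.mul_sub, Matrix.sub_mul]; abel, tinner_sub_right]
    linarith [(abs_le.mp h').2, (abs_le.mp h).1]
  have hb : 0 ≤ L.trace - tinner P L :=
    hP.trace_one_sub_mul_mul L ▸ (hP.posSemidef_one_sub_mul_mul hL).trace_nonneg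
  have hb' : 0 ≤ L'.trace - tinner P L' :=
    hP.trace_one_sub_mul_mul L' ▸ (hP.posSemidef_one_sub_mul_mul hL').trace_nonneg
  have hPD : tinner P L - tinner P L' ≤ frob P * frob D := by
    rw [← neg_le_neg_iff, neg_sub, ← tinner_sub_right]
    exact neg_le_of_abs_le (abs_tinner_le P D)
  have hδ : 0 ≤ δ := by linarith [opNorm_nonneg W]
  have h1 := mul_le_mul_of_nonneg_right hW (mul_nonneg (frob_nonneg P) (frob_nonneg D))
  have h2 := mul_le_mul_of_nonneg_right hW (add_nonneg hb' hb)
  have h3 := mul_le_mul_of_nonneg_left hPD hδ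
  have h4 := mul_nonneg hδ hb'
  have hsum : tinner W D = tinner W (P * D) + tinner W ((1 - P) * D * P)
      + tinner W ((1 - P) * D * (1 - P)) := by
    conv_lhs => rw [hsplit]
    rw [tinner_add_right, tinner_add_right]
  rw [hsum]
  linarith [hP.tinner_mul_le W D, hP.tinner_one_sub_mul_mul_le W D]

open scoped MatrixOrder in
lemma _root_.Matrix.PosSemidef.eigenvectorUnitary_mul_diagonal_sqrt_mul_star
    {A : Matrix (Fin n) (Fin n) ℝ} (hA : A.PosSemidef) :
    hA.1.eigenvectorUnitary.1 * diagonal (fun i => √(hA.1.eigenvalues i)) *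
      star hA.1.eigenvectorUnitary.1 = CFC.sqrt A := by
  rw [CFC.sqrt_eq_cfc, cfc_nnreal_eq_real _ A, hA.1.cfc_eq]
  simp only [IsHermitian.cfc, Unitary.conjStarAlgAut_apply]
  congr 3
  funext i
  simp [Real.coe_sqrt, Real.coe_toNNReal', max_eq_left (hA.eigenvalues_nonneg i)]

open scoped MatrixOrder in
lemma eigenvectorUnitary_mul_diagonal_sqrt_mul_transpose {L : Matrix (Fin n) (Fin n) ℝ}
    (hL : L.PosSemidef) :
    (posSemidef_conjTranspose_mul_self L).1.eigenvectorUnitary.1 *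
      diagonal (fun i => √((posSemidef_conjTranspose_mul_self L).1.eigenvalues i)) *
      ((posSemidef_conjTranspose_mul_self L).1.eigenvectorUnitary.1)ᵀ = L := by
  have hsqrt : CFC.sqrt (Lᴴ * L) = L := by rw [hL.1, CFC.sqrt_mul_self L hL.nonneg]
  rw [← conjTranspose_eq_transpose_of_trivial
    (posSemidef_conjTranspose_mul_self L).1.eigenvectorUnitary.1,
    ← star_eq_conjTranspose (posSemidef_conjTranspose_mul_self L).1.eigenvectorUnitary.1,
    (posSemidef_conjTranspose_mul_self L).eigenvectorUnitary_mul_diagonal_sqrt_mul_star,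
    hsqrt]

lemma nuclearNorm_eq_trace {L : Matrix (Fin n) (Fin n) ℝ} (hL : L.PosSemidef) :
    nuclearNorm L = L.trace := by
  rw [nuclearNorm, star_eq_conjTranspose, conjTranspose_eq_transpose_of_trivial
    (posSemidef_conjTranspose_mul_self L).1.eigenvectorUnitary.1,
    eigenvectorUnitary_mul_diagonal_sqrt_mul_transpose hL]

lemma exists_orthogonal_eq_mul_diagonal_svDesc {L : Matrix (Fin n) (Fin n) ℝ}
    (hL : L.PosSemidef) : ∃ V : Matrix (Fin n) (Fin n) ℝ,
      Vᵀ * V = 1 ∧ L = V * diagonal (svDesc L) * Vᵀ := by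
  have hLU := eigenvectorUnitary_mul_diagonal_sqrt_mul_transpose hL
  set hLL := (posSemidef_conjTranspose_mul_self L).1
  set U := hLL.eigenvectorUnitary.1
  set e := Fin.revPerm.trans (Tuple.sort hLL.eigenvalues)
  have hsv : svDesc L = (fun i => √(hLL.eigenvalues i)) ∘ e := rfl
  refine ⟨U.submatrix id e, ?_, ?_⟩
  · rw [transpose_submatrix, ← submatrix_mul _ _ _ _ _ Function.bijective_id,
      hLL.transpose_eigenvectorUnitary_mul, submatrix_one_equiv]
  · conv_lhs => rw [← hLU]
    rw [hsv, ← submatrix_diagonal_equiv, transpose_submatrix, submatrix_mul_equiv,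
      submatrix_mul_equiv, submatrix_id_id]

section Orthogonal

variable {V : Matrix (Fin n) (Fin n) ℝ} (hV : Vᵀ * V = 1)
include hV

lemma mul_diagonal_mul_transpose_mul (g h : Fin n → ℝ) :
    V * diagonal g * Vᵀ * (V * diagonal h * Vᵀ) = V * diagonal (g * h) * Vᵀ := by
  rw [show V * diagonal g * Vᵀ * (V * diagonal h * Vᵀ)
      = V * (diagonal g * (Vᵀ * V) * diagonal h) * Vᵀ by simp only [Matrix.mul_assoc],
    hV, Matrix.mul_one, diagonal_mul_diagonal]
  rfl

lemma trace_mul_diagonal_mul_transpose (g : Fin n → ℝ) :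
    (V * diagonal g * Vᵀ).trace = ∑ j, g j := by
  rw [trace_mul_cycle, hV, Matrix.one_mul, trace_diagonal]

end Orthogonal

lemma exists_isStarProjection_tail {L : Matrix (Fin n) (Fin n) ℝ} (hL : L.PosSemidef)
    {k : ℕ} (hk : k ≤ n) : ∃ P : Matrix (Fin n) (Fin n) ℝ, IsStarProjection P ∧ frob P ^ 2 = k ∧
      L.trace - tinner P L = ∑ j ∈ univ.filter (fun j : Fin n => k ≤ (j : ℕ)), svDesc L j := by
  obtain ⟨V, hV, hLV⟩ := exists_orthogonal_eq_mul_diagonal_svDesc hL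
  set d : Fin n → ℝ := fun j => if (j : ℕ) < k then 1 else 0
  have hsymm : (V * diagonal d * Vᵀ)ᵀ = V * diagonal d * Vᵀ := by
    simp [transpose_mul, Matrix.mul_assoc]
  have hP : IsStarProjection (V * diagonal d * Vᵀ) := by
    refine isStarProjection_iff'.mpr ⟨?_, ?_⟩
    · have hdd : d * d = d := funext fun j => by by_cases h : (j : ℕ) < k <;> simp [d, h]
      rw [mul_diagonal_mul_transpose_mul hV, hdd]
    · rwa [star_eq_conjTranspose, conjTranspose_eq_transpose_of_trivial]
  refine ⟨_, hP, ?_, ?_⟩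
  · rw [hP.frob_sq_eq_trace, trace_mul_diagonal_mul_transpose hV]
    simp [d, Fin.card_filter_val_lt, hk]
  · rw [tinner, hsymm]
    conv_lhs => rw [hLV]
    rw [mul_diagonal_mul_transpose_mul hV, trace_mul_diagonal_mul_transpose hV,
      trace_mul_diagonal_mul_transpose hV, ← sum_sub_distrib, sum_filter]
    refine sum_congr rfl fun j _ => ?_
    simp only [Pi.mul_apply, d]
    split_ifs <;> first | omega | ring

lemma onesMat_posSemidef : (onesMat : Matrix (Fin n) (Fin n) ℝ).PosSemidef := by
  have h : (onesMat : Matrix (Fin n) (Fin n) ℝ) = vecMulVec (fun _ => 1) (star fun _ => 1) := by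
    ext i j; simp [onesMat, vecMulVec_apply]
  rw [h]; exact posSemidef_vecMulVec_self_star _

lemma trace_onesMat : (onesMat : Matrix (Fin n) (Fin n) ℝ).trace = n := by
  simp [trace, onesMat]

lemma frob_smul_onesMat (a : ℝ) :
    frob (a • (onesMat : Matrix (Fin n) (Fin n) ℝ)) = |a| * n := by
  rw [frob]
  simp only [Matrix.smul_apply, onesMat, of_apply, smul_eq_mul, mul_one, sum_const, card_univ,
    Fintype.card_fin, nsmul_eq_mul]
  rw [show (n : ℝ) * (n * a ^ 2) = (|a| * n) ^ 2 by rw [mul_pow, sq_abs]; ring,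
    Real.sqrt_sq (by positivity)]

lemma tinner_smul_onesMat_le (W : Matrix (Fin n) (Fin n) ℝ) (a : ℝ) :
    tinner W (a • onesMat) ≤ opNorm W * frob (a • (onesMat : Matrix (Fin n) (Fin n) ℝ)) := by
  have h := abs_tinner_le_opNorm_mul_trace W onesMat_posSemidef
  rw [trace_onesMat] at h
  rw [tinner_smul_right, frob_smul_onesMat]
  calc a * tinner W onesMat ≤ |a| * |tinner W onesMat| := by rw [← abs_mul]; exact le_abs_self _
    _ ≤ |a| * (opNorm W * n) := mul_le_mul_of_nonneg_left h (abs_nonneg a)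
    _ = _ := by ring

lemma onesMat_mul_eq_zero {L : Matrix (Fin n) (Fin n) ℝ} (hL : Jmat n * L = L) :
    onesMat * L = 0 := by
  rcases Nat.eq_zero_or_pos n with rfl | hn
  · exact Subsingleton.elim _ _
  rw [Jmat, sub_mul, Matrix.one_mul, sub_eq_self, smul_mul] at hL
  exact (smul_eq_zero.mp hL).resolve_left (inv_ne_zero (Nat.cast_ne_zero.mpr hn.ne'))

lemma tinner_smul_onesMat_of_centered (a : ℝ) {L : Matrix (Fin n) (Fin n) ℝ}
    (hL : Jmat n * L = L) : tinner (a • onesMat) L = 0 := by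
  have hsymm : (onesMat : Matrix (Fin n) (Fin n) ℝ)ᵀ = onesMat := by ext; simp [onesMat]
  rw [tinner_smul_left, tinner, hsymm, onesMat_mul_eq_zero hL, trace_zero, mul_zero]

lemma abs_apply_smul_onesMat_add_sub_le {C κ α α' : ℝ} (hα : |α| ≤ C * κ) (hα' : |α'| ≤ C * κ)
    {L L' : Matrix (Fin n) (Fin n) ℝ} (hL : supNorm L ≤ κ / n) (hL' : supNorm L' ≤ κ / n)
    (i j : Fin n) :
    |((α' - α) • (onesMat : Matrix (Fin n) (Fin n) ℝ) + (L' - L)) i j| ≤ 2 * (C * κ + κ / n) := by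
  simp only [Matrix.add_apply, Matrix.smul_apply, onesMat, of_apply, smul_eq_mul, mul_one,
    Matrix.sub_apply]
  have := abs_le_supNorm L i j
  have := abs_le_supNorm L' i j
  calc |α' - α + (L' i j - L i j)| ≤ |α'| + |α| + (|L' i j| + |L i j|) :=
        (abs_add_le _ _).trans (add_le_add (abs_sub _ _) (abs_sub _ _))
    _ ≤ 2 * (C * κ + κ / n) := by linarith

lemma sq_add_sq_add_sq_le {τ u y z a b c e : ℝ} (hτ : 0 < τ)
    (h : τ * (u ^ 2 + y ^ 2 + z ^ 2) ≤ a * u + b * y + c * z + e) :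
    τ ^ 2 * (u ^ 2 + y ^ 2 + z ^ 2) ≤ a ^ 2 + b ^ 2 + c ^ 2 + 2 * τ * e := by
  nlinarith [mul_le_mul_of_nonneg_left h hτ.le, sq_nonneg (τ * u - a), sq_nonneg (τ * y - b),
    sq_nonneg (τ * z - c)]

lemma sq_errors_le_of_quadratic_bound {τ δ γ u y z k s T R : ℝ} (hτ : 0 < τ) (hδ : 0 < δ)
    (hγ : 0 < γ) (hk : 0 ≤ k) (hs : 0 ≤ s) (hT : 0 ≤ T) (hR : 0 ≤ R)
    (h : τ * (u ^ 2 + y ^ 2 + z ^ 2)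
      ≤ δ * u + 4 * δ * √k * y + 3 * γ * √s * z + (3 * δ * T + 4 * γ * R)) :
    u ^ 2 + y ^ 2 + z ^ 2 ≤ 1 * δ ^ 2 / τ ^ 2 + 16 * (δ ^ 2 / τ ^ 2) * (k + τ / δ * T)
      + 9 * (γ ^ 2 / τ ^ 2) * (s + τ / γ * R) := by
  have hsq := sq_add_sq_add_sq_le hτ h
  rw [mul_pow, mul_pow, mul_pow, mul_pow, Real.sq_sqrt hk, Real.sq_sqrt hs] at hsq
  rw [show 1 * δ ^ 2 / τ ^ 2 + 16 * (δ ^ 2 / τ ^ 2) * (k + τ / δ * T)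
      + 9 * (γ ^ 2 / τ ^ 2) * (s + τ / γ * R)
      = (δ ^ 2 + 16 * δ ^ 2 * k + 9 * γ ^ 2 * s + 16 * τ * δ * T + 9 * τ * γ * R) / τ ^ 2 by
    field_simp; ring, le_div_iff₀ (by positivity)]
  nlinarith [mul_nonneg (mul_nonneg hτ.le hδ.le) hT, mul_nonneg (mul_nonneg hτ.le hγ.le) hR]

lemma quadratic_bound_of_basic_inequality {W : Matrix (Fin n) (Fin n) ℝ} {τ κ δ γ C αs αh : ℝ}
    {Ls Ss Lh Sh : Matrix (Fin n) (Fin n) ℝ} (hn : 0 < n) (hτ : 0 < τ) (hγ : 0 < γ)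
    (hLs : Ls.PosSemidef) (hJs : Jmat n * Ls = Ls) (hsupLs : supNorm Ls ≤ κ / n)
    (hαs : |αs| ≤ C * κ) (hαh : |αh| ≤ C * κ) (hLh : Lh.PosSemidef) (hJh : Jmat n * Lh = Lh)
    (hsupLh : supNorm Lh ≤ κ / n) (hδW : 2 * opNorm W ≤ δ)
    (hγW : 2 * supNorm W + 4 * κ * τ * (C * n + 1) / n ≤ γ)
    (hbasic : τ / 2 * frob ((αh • onesMat + Lh + Sh) - (αs • onesMat + Ls + Ss)) ^ 2
      ≤ tinner W ((αh • onesMat + Lh + Sh) - (αs • onesMat + Ls + Ss))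
        + δ * (Ls.trace - Lh.trace) + γ * (l1 Ss - l1 Sh))
    {k s : ℕ} {M : Finset (Fin n × Fin n)} (hkn : k ≤ n) (hM : M.card ≤ s) :
    τ * (frob ((αh - αs) • (onesMat : Matrix (Fin n) (Fin n) ℝ)) ^ 2 + frob (Lh - Ls) ^ 2
        + frob (Sh - Ss) ^ 2)
      ≤ δ * frob ((αh - αs) • (onesMat : Matrix (Fin n) (Fin n) ℝ))
        + 4 * δ * √k * frob (Lh - Ls) + 3 * γ * √s * frob (Sh - Ss)
        + (3 * δ * ∑ j ∈ univ.filter (fun j : Fin n => k ≤ (j : ℕ)), svDesc Ls j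
          + 4 * γ * ∑ p ∈ univ \ M, |Ss p.1 p.2|) := by
  set A := (αh - αs) • (onesMat : Matrix (Fin n) (Fin n) ℝ)
  have hΔ : (αh • onesMat + Lh + Sh) - (αs • onesMat + Ls + Ss) = A + (Lh - Ls) + (Sh - Ss) := by
    simp only [A, sub_smul]; abel
  have hcentered : Jmat n * (Lh - Ls) = Lh - Ls := by rw [Matrix.mul_sub, hJh, hJs]
  have hnorm : frob (A + (Lh - Ls) + (Sh - Ss)) ^ 2 = frob A ^ 2 + frob (Lh - Ls) ^ 2
      + frob (Sh - Ss) ^ 2 + 2 * tinner (A + (Lh - Ls)) (Sh - Ss) := by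
    rw [frob_add_sq, frob_add_sq, tinner_smul_onesMat_of_centered _ hcentered]; ring
  -- the cross term `τ ⟨A + ΔL, ΔS⟩` of `(τ/2)‖Δ‖²` is paid for by the `ℓ₁` penalty
  have hB : ∀ i j, |(W - τ • (A + (Lh - Ls))) i j| ≤ γ / 2 := fun i j => by
    have hW := abs_le_supNorm W i j
    have hA := abs_apply_smul_onesMat_add_sub_le hαs hαh hsupLs hsupLh i j
    have hγ' : 4 * κ * τ * (C * n + 1) / n = 2 * τ * (2 * (C * κ + κ / n)) := by
      field_simp; ring
    rw [Matrix.sub_apply, Matrix.smul_apply, smul_eq_mul]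
    calc |W i j - τ * (A + (Lh - Ls)) i j| ≤ |W i j| + τ * |(A + (Lh - Ls)) i j| :=
          (abs_sub _ _).trans_eq (by rw [abs_mul, abs_of_pos hτ])
      _ ≤ supNorm W + τ * (2 * (C * κ + κ / n)) :=
          add_le_add hW (mul_le_mul_of_nonneg_left hA hτ.le)
      _ ≤ γ / 2 := by linarith
  obtain ⟨P, hP, hPk, hPtail⟩ := exists_isStarProjection_tail hLs hkn
  have hfrobP : frob P = √k := by rw [← hPk, Real.sqrt_sq (frob_nonneg P)]
  have hL := tinner_sub_add_trace_sub_le hδW hP hLs hLh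
  have hS := tinner_sub_add_l1_sub_le hγ.le hB Ss Sh hM
  have hA := mul_le_mul_of_nonneg_right hδW (frob_nonneg A)
  rw [tinner_sub_left, tinner_smul_left] at hS
  rw [hfrobP, hPtail] at hL
  rw [hΔ, hnorm, tinner_add_right, tinner_add_right] at hbasic
  linarith [tinner_smul_onesMat_le W (αh - αs)]

/-- main non-asymptotic error bound, Theorem 1: there are universal constants
`c₁, c₂, c₃ > 0` such that for any data satisfying the model assumptions, the minimizer of the
penalized likelihood obeys the stated squared-Frobenius error bound. -/
theorem stmt0 :
    ∃ c₁ c₂ c₃ : ℝ, 0 < c₁ ∧ 0 < c₂ ∧ 0 < c₃ ∧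
      ∀ (n : ℕ) (X : Matrix (Fin n) (Fin n) ℝ) (τ κ δ γ C αs αh : ℝ)
        (Ls Ss Lh Sh : Matrix (Fin n) (Fin n) ℝ),
        1 ≤ n → 0 < τ → 0 < κ → 0 < δ → 0 < γ → 0 < C →
        -- ground truth assumptions
        Ls.PosSemidef → Jmat n * Ls = Ls → supNorm Ls ≤ κ / n →
        Ss.IsSymm → |αs| ≤ C * κ →
        -- (α̂, L̂, Ŝ) is feasible
        |αh| ≤ C * κ → Sh.IsSymm → Lh.PosSemidef → Jmat n * Lh = Lh → supNorm Lh ≤ κ / n →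
        -- (α̂, L̂, Ŝ) minimizes the penalized objective over the feasible set
        (∀ (α : ℝ) (L S : Matrix (Fin n) (Fin n) ℝ),
          |α| ≤ C * κ → S.IsSymm → L.PosSemidef → Jmat n * L = L → supNorm L ≤ κ / n →
          hfun X (αh • onesMat + Lh + Sh) + δ * nuclearNorm Lh + γ * l1 Sh ≤
            hfun X (α • onesMat + L + S) + δ * nuclearNorm L + γ * l1 S) →
        -- strong convexity bound at the pair (Θ̂, Θ*)
        (hfun X (αh • onesMat + Lh + Sh) - hfun X (αs • onesMat + Ls + Ss) ≥
            -(1 / (n : ℝ)) * tinner (X - logis (αs • onesMat + Ls + Ss))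
                ((αh • onesMat + Lh + Sh) - (αs • onesMat + Ls + Ss))
              + (τ / 2) * (frob ((αh • onesMat + Lh + Sh) - (αs • onesMat + Ls + Ss))) ^ 2) →
        -- conditions on the regularization parameters
        δ ≥ 2 * opNorm ((1 / (n : ℝ)) • (X - logis (αs • onesMat + Ls + Ss))) →
        γ ≥ 2 * supNorm ((1 / (n : ℝ)) • (X - logis (αs • onesMat + Ls + Ss)))
            + 4 * κ * τ * (C * n + 1) / n →
        -- conclusion, for every k ∈ {1,…,n}, s ∈ {1,…,n²}, |M| ≤ s
        ∀ (k s : ℕ) (M : Finset (Fin n × Fin n)),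
          1 ≤ k → k ≤ n → 1 ≤ s → s ≤ n ^ 2 → M.card ≤ s →
          (frob ((αh - αs) • (onesMat : Matrix (Fin n) (Fin n) ℝ))) ^ 2
              + (frob (Lh - Ls)) ^ 2 + (frob (Sh - Ss)) ^ 2
            ≤ c₁ * δ ^ 2 / τ ^ 2
              + c₂ * (δ ^ 2 / τ ^ 2) *
                  (k + (τ / δ) *
                    ∑ j ∈ Finset.univ.filter (fun j : Fin n => k ≤ (j : ℕ)), svDesc Ls j)
              + c₃ * (γ ^ 2 / τ ^ 2) *
                  (s + (τ / γ) * ∑ p ∈ Finset.univ \ M, |Ss p.1 p.2|) := by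
  refine ⟨1, 16, 9, one_pos, by norm_num, by norm_num, ?_⟩
  intro n X τ κ δ γ C αs αh Ls Ss Lh Sh hn hτ _ hδ hγ _ hLs hJs hsupLs hSs hαs hαh _ hLh hJh
    hsupLh hmin hsc hδW hγW k s M _ hkn _ _ hM
  have hopt := hmin αs Ls Ss hαs hSs hLs hJs hsupLs
  rw [nuclearNorm_eq_trace hLh, nuclearNorm_eq_trace hLs] at hopt
  refine sq_errors_le_of_quadratic_bound hτ hδ hγ k.cast_nonneg s.cast_nonneg
    (sum_nonneg fun j _ => svDesc_nonneg Ls j) (sum_nonneg fun _ _ => abs_nonneg _)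
    (quadratic_bound_of_basic_inequality hn hτ hγ hLs hJs hsupLs hαs hαh hLh hJh hsupLh hδW hγW
      ?_ hkn hM)
  rw [tinner_smul_left]
  linarith

end CitNet
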